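/- arXiv:1511.02995 — 3 statements merged into one kernel-verified Lean document; each statement's English description precedes it below -/
import Mathlib

section
/- Let x, y, z, u_x, u_y, u_z be real random variables with structural equations z = βw + u_z, x = δz + u_x, y = αx + u_y, where w, u_z, u_x, u_y are random variables such that u_z is uncorrelated with w, u_x, and u_y, and Var(u_z) > 0, δ ≠ 0. Define z* = z − βw. Then Cov(z*, x) = δ·Var(u_z) ≠ 0 and Cov(z*, y) = α·Cov(z*, x), hence α = Cov(z*, y)/Cov(z*, x). -/
open MeasureTheory

/-- Covariance of two real random variables. -/
noncomputable def cov {Ω : Type*} [MeasurableSpace Ω] (μ : Measure Ω) (f g : Ω → ℝ) : ℝ :=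
  ∫ ω, (f ω - ∫ x, f x ∂μ) * (g ω - ∫ x, g x ∂μ) ∂μ

/-! The instrument `z* = z - βw` is literally the disturbance `u_z`. Covariance with `u_z` is
linear, and `u_z` is uncorrelated with `w`, `u_x`, `u_y`, so pushing it through the structural
equations only picks up the `u_z`-terms: `Cov(u_z, z) = Var(u_z)`, `Cov(u_z, x) = δ Var(u_z)` and
`Cov(u_z, y) = α Cov(u_z, x)`. -/

open ProbabilityTheory

section

variable {Ω : Type*} [MeasurableSpace Ω] {μ : Measure Ω}

lemma cov_eq_covariance (X Y : Ω → ℝ) : cov μ X Y = cov[X, Y; μ] := rfl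

lemma covariance_const_mul_add_right [IsFiniteMeasure μ] {X Y Z : Ω → ℝ}
    (hX : MemLp X 2 μ) (hY : MemLp Y 2 μ) (hZ : MemLp Z 2 μ) (c : ℝ) :
    cov[X, fun ω ↦ c * Y ω + Z ω; μ] = c * cov[X, Y; μ] + cov[X, Z; μ] := by
  rw [← covariance_const_mul_right c]
  exact covariance_add_right hX (hY.const_mul c) hZ

end

/-- in the SEM  z = βw + u_z, x = δz + u_x, y = αx + u_y, with u_z
uncorrelated with w, u_x, u_y, Var(u_z) > 0 and δ ≠ 0, the auxiliary variable
z* = z − βw is an instrument for α:  Cov(z*,x) = δ·Var(u_z) ≠ 0,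
Cov(z*,y) = α·Cov(z*,x), hence α = Cov(z*,y)/Cov(z*,x). -/
theorem auxiliary_instrument_identifies_alpha
    {Ω : Type*} [MeasurableSpace Ω] (μ : Measure Ω) [IsProbabilityMeasure μ]
    (w uz ux uy z x y : Ω → ℝ) (α β δ : ℝ)
    (hw : MemLp w 2 μ) (huz : MemLp uz 2 μ) (hux : MemLp ux 2 μ) (huy : MemLp uy 2 μ)
    (hz : ∀ ω, z ω = β * w ω + uz ω)
    (hx : ∀ ω, x ω = δ * z ω + ux ω)
    (hy : ∀ ω, y ω = α * x ω + uy ω)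
    (huzw : cov μ uz w = 0) (huzux : cov μ uz ux = 0) (huzuy : cov μ uz uy = 0)
    (hvar : 0 < cov μ uz uz) (hδ : δ ≠ 0)
    (zstar : Ω → ℝ) (hzstar : ∀ ω, zstar ω = z ω - β * w ω) :
    cov μ zstar x = δ * cov μ uz uz ∧ cov μ zstar x ≠ 0 ∧
      cov μ zstar y = α * cov μ zstar x ∧
      α = cov μ zstar y / cov μ zstar x := by
  have hzstar_eq : zstar = uz := funext fun ω ↦ by rw [hzstar, hz]; ring
  have hz2 : MemLp z 2 μ := funext hz ▸ (hw.const_mul β).add huz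
  have hx2 : MemLp x 2 μ := funext hx ▸ (hz2.const_mul δ).add hux
  simp only [hzstar_eq, cov_eq_covariance] at *
  have hcov_z : cov[uz, z; μ] = cov[uz, uz; μ] := by
    rw [funext hz, covariance_const_mul_add_right huz hw huz, huzw, mul_zero, zero_add]
  have hcov_x : cov[uz, x; μ] = δ * cov[uz, uz; μ] := by
    rw [funext hx, covariance_const_mul_add_right huz hz2 hux, hcov_z, huzux, add_zero]
  have hcov_y : cov[uz, y; μ] = α * cov[uz, x; μ] := by
    rw [funext hy, covariance_const_mul_add_right huz hx2 huy, huzuy, add_zero]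
  have hcov_x_ne : cov[uz, x; μ] ≠ 0 := hcov_x ▸ mul_ne_zero hδ hvar.ne'
  exact ⟨hcov_x, hcov_x_ne, hcov_y, by rw [hcov_y, mul_div_cancel_right₀ α hcov_x_ne]⟩
end

section
/- In the augmented graph G^{E+} for a known edge e = (w, z): if π_{−e} is an unblocked path that starts z* ← w and continues with π_w, and there is no corresponding unblocked path π_e = z* ← z ← w followed by π_w, then π_w (and hence π_{−e}) passes through the node z. -/
/-! Framework for mixed graphs (directed + bidirected edges), paths, d-separation,
and Wright's rules, following Chen, Pearl & Bareinboim. -/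

/-- A mixed graph: directed and bidirected edges. -/
structure MixedGraph (V : Type) where
  dir : V → V → Prop
  bidir : V → V → Prop
  bidir_symm : ∀ {a b}, bidir a b → bidir b a

namespace MixedGraph

variable {V : Type} {G : MixedGraph V}

/-- Walks in a mixed graph: at each step we traverse a directed edge forwards
(`consDir`), a directed edge backwards (`consRev`), or a bidirected edge (`consBi`). -/
inductive Walk (G : MixedGraph V) : V → V → Type
  | nil (v : V) : Walk G v v
  | consDir {a b c : V} (e : G.dir a b) (w : Walk G b c) : Walk G a c
  | consRev {a b c : V} (e : G.dir b a) (w : Walk G b c) : Walk G a c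
  | consBi {a b c : V} (e : G.bidir a b) (w : Walk G b c) : Walk G a c

namespace Walk

/-- The list of vertices visited by a walk. -/
def support : {a b : V} → Walk G a b → List V
  | _, _, .nil v => [v]
  | a, _, .consDir _ w => a :: support w
  | a, _, .consRev _ w => a :: support w
  | a, _, .consBi _ w => a :: support w

/-- Whether the first edge of the walk points into its starting vertex. -/
def firstIntoStart : {a b : V} → Walk G a b → Prop
  | _, _, .nil _ => False
  | _, _, .consDir _ _ => False
  | _, _, .consRev _ _ => True
  | _, _, .consBi _ _ => True

/-- A walk is unblocked (given the empty conditioning set) if it has no colliders: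
no internal vertex has both adjacent edges pointing into it. -/
def Unblocked : {a b : V} → Walk G a b → Prop
  | _, _, .nil _ => True
  | _, _, .consDir _ w => ¬ firstIntoStart w ∧ Unblocked w
  | _, _, .consRev _ w => Unblocked w
  | _, _, .consBi _ w => ¬ firstIntoStart w ∧ Unblocked w

/-- An unblocked path: an unblocked walk visiting no vertex twice. -/
def IsUnblockedPath {a b : V} (w : Walk G a b) : Prop :=
  w.Unblocked ∧ w.support.Nodup

/-- A directed walk (all edges traversed forwards). -/
def Directed : {a b : V} → Walk G a b → Prop
  | _, _, .nil _ => True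
  | _, _, .consDir _ w => Directed w
  | _, _, .consRev _ _ => False
  | _, _, .consBi _ _ => False

/-- A half-trek: a directed path, or a bidirected edge followed by a directed path. -/
def HalfTrek : {a b : V} → Walk G a b → Prop
  | _, _, .nil _ => True
  | _, _, .consDir _ w => Directed w
  | _, _, .consRev _ _ => False
  | _, _, .consBi _ w => Directed w

/-- The product of parameters along a walk: directed edges contribute the structural
coefficient `lam`, bidirected edges the error covariance `om`. -/
def weight (lam om : V → V → ℝ) : {a b : V} → Walk G a b → ℝ
  | _, _, .nil _ => 1
  | _, _, .consDir (a := a) (b := b) _ w => lam a b * weight lam om w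
  | _, _, .consRev (a := a) (b := b) _ w => lam b a * weight lam om w
  | _, _, .consBi (a := a) (b := b) _ w => om a b * weight lam om w

/-- Auxiliary: vertices with a directed edge on the walk leaving them towards the start. -/
def leftAux : {a b : V} → Walk G a b → Set V
  | _, _, .nil _ => ∅
  | _, _, .consDir _ w => leftAux w
  | _, _, .consRev (b := b) _ w => insert b (leftAux w)
  | _, _, .consBi _ w => leftAux w

/-- Auxiliary: vertices with a directed edge on the walk leaving them towards the end. -/
def rightAux : {a b : V} → Walk G a b → Set V
  | _, _, .nil _ => ∅
  | _, _, .consDir (a := a) _ w => insert a (rightAux w)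
  | _, _, .consRev _ w => rightAux w
  | _, _, .consBi _ w => rightAux w

/-- Left(π): the start vertex together with all vertices having a directed edge on π
leaving them in the direction of the start. -/
def leftSet {a b : V} (w : Walk G a b) : Set V := insert a (leftAux w)

/-- Right(π): the end vertex together with all vertices having a directed edge on π
leaving them in the direction of the end. -/
def rightSet {a b : V} (w : Walk G a b) : Set V := insert b (rightAux w)

/-- The directed edge (s,t) occurs on the walk (in either traversal direction). -/
def edgeOn (s t : V) : {a b : V} → Walk G a b → Prop
  | _, _, .nil _ => False
  | _, _, .consDir (a := a) (b := b) _ w => (a = s ∧ b = t) ∨ edgeOn s t w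
  | _, _, .consRev (a := a) (b := b) _ w => (b = s ∧ a = t) ∨ edgeOn s t w
  | _, _, .consBi _ w => edgeOn s t w

end Walk

/-- d-separation of `a` and `b` (given the empty set): no unblocked path joins them. -/
def DSep (G : MixedGraph V) (a b : V) : Prop :=
  ∀ w : Walk G a b, ¬ w.IsUnblockedPath

/-- The Wright's-rules expression for the covariance of `a` and `b`: the sum over
unblocked paths between `a` and `b` of the products of parameters along them. -/
noncomputable def wrightCov (G : MixedGraph V) (lam om : V → V → ℝ) (a b : V) : ℝ :=
  ∑' p : {w : Walk G a b // w.IsUnblockedPath}, p.1.weight lam om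

/-- Delete a set of directed edges from a graph. -/
def delDir (G : MixedGraph V) (E : Set (V × V)) : MixedGraph V where
  dir a b := G.dir a b ∧ (a, b) ∉ E
  bidir := G.bidir
  bidir_symm := G.bidir_symm

/-- The augmented graph adding one auxiliary node (`Sum.inr ()`), with directed
edges into it from every vertex in `S` and no other new edges. -/
def augment (G : MixedGraph V) (S : Set V) : MixedGraph (V ⊕ Unit) where
  dir p q := (∃ a b, p = .inl a ∧ q = .inl b ∧ G.dir a b) ∨
    (∃ a, p = .inl a ∧ q = .inr () ∧ a ∈ S)
  bidir p q := ∃ a b, p = .inl a ∧ q = .inl b ∧ G.bidir a b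
  bidir_symm := by
    rintro p q ⟨a, b, rfl, rfl, h⟩
    exact ⟨b, a, rfl, rfl, G.bidir_symm h⟩

/-- The augmented graph adding one auxiliary node for each element of an index type
`Z` (embedded in `V` via `emb`), with directed edges into the node `Sum.inr i` from
`emb i` and from the vertices in `par i`, and no other new edges. -/
def augmentMany (G : MixedGraph V) {Z : Type} (emb : Z → V) (par : Z → Set V) :
    MixedGraph (V ⊕ Z) where
  dir p q := (∃ a b, p = .inl a ∧ q = .inl b ∧ G.dir a b) ∨
    (∃ a i, p = .inl a ∧ q = .inr i ∧ (a = emb i ∨ a ∈ par i))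
  bidir p q := ∃ a b, p = .inl a ∧ q = .inl b ∧ G.bidir a b
  bidir_symm := by
    rintro p q ⟨a, b, rfl, rfl, h⟩
    exact ⟨b, a, rfl, rfl, G.bidir_symm h⟩

/-- Embedding of walks of `G` into an augmented graph of `G`. -/
def Walk.mapAug {S : Set V} : {a b : V} → Walk G a b →
    Walk (G.augment S) (.inl a) (.inl b)
  | _, _, .nil v => .nil _
  | _, _, .consDir (a := a) (b := b) e w => .consDir (Or.inl ⟨a, b, rfl, rfl, e⟩) w.mapAug
  | _, _, .consRev (a := a) (b := b) e w => .consRev (Or.inl ⟨b, a, rfl, rfl, e⟩) w.mapAug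
  | _, _, .consBi (a := a) (b := b) e w => .consBi ⟨a, b, rfl, rfl, e⟩ w.mapAug

end MixedGraph

namespace MixedGraph.Walk

variable {V : Type} {G : MixedGraph V}

theorem support_consRev {a b c : V} (e : G.dir b a) (p : Walk G b c) :
    (consRev e p).support = a :: p.support := rfl

/-- Prepending an edge that points away from the walk cannot create a collider. -/
theorem isUnblockedPath_consRev_iff {a b c : V} (e : G.dir b a) (p : Walk G b c) :
    (consRev e p).IsUnblockedPath ↔ a ∉ p.support ∧ p.IsUnblockedPath := by
  rw [IsUnblockedPath, IsUnblockedPath, support_consRev, List.nodup_cons]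
  exact ⟨fun ⟨hp, ha, hnd⟩ => ⟨ha, hp, hnd⟩, fun ⟨ha, hp, hnd⟩ => ⟨hp, ha, hnd⟩⟩

theorem support_mapAug {S : Set V} :
    ∀ {a b : V} (p : Walk G a b), (p.mapAug (S := S)).support = p.support.map Sum.inl
  | _, _, .nil _ => rfl
  | _, _, .consDir _ p => congrArg _ (support_mapAug p)
  | _, _, .consRev _ p => congrArg _ (support_mapAug p)
  | _, _, .consBi _ p => congrArg _ (support_mapAug p)

end MixedGraph.Walk

open MixedGraph Walk in
/-- Lemma 7: in the augmented graph for the known edge e = (w, z), if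
π_{−e} = z* ← w followed by π_w is an unblocked path but the corresponding walk
π_e = z* ← z ← w followed by π_w is not an unblocked path, then π_w (and hence
π_{−e}) passes through the node z. -/
theorem excess_path_passes_through_z
    {V : Type} (G : MixedGraph V) (w z t : V)
    (ezs : (G.augment {z, w}).dir (.inl z) (.inr ()))
    (ews : (G.augment {z, w}).dir (.inl w) (.inr ()))
    (ewz : (G.augment {z, w}).dir (.inl w) (.inl z))
    (πw : Walk G w t)
    (hme : (Walk.consRev ews πw.mapAug).IsUnblockedPath)
    (hnot : ¬ (Walk.consRev ezs (Walk.consRev ewz πw.mapAug)).IsUnblockedPath) :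
    z ∈ πw.support := by
  by_contra hz
  have hπw : πw.mapAug.IsUnblockedPath := ((isUnblockedPath_consRev_iff ews _).1 hme).2
  apply hnot
  refine (isUnblockedPath_consRev_iff ezs _).2 ⟨?_, (isUnblockedPath_consRev_iff ewz _).2 ⟨?_, hπw⟩⟩
  · simp [support_consRev, support_mapAug]
  · simpa [support_mapAug] using hz
end

section
/- Consider the linear SEM with equations z = u_z, x = c·z + u_x (where u_x may be correlated with u_y), and y = α·x + γ·z + u_y, where the direct-path coefficient γ is known, u_z is uncorrelated with u_x and u_y, and Cov(z,x) = c·Var(u_z) ≠ 0. Define y* = y − γ·z. Then Cov(z, y*) = α·Cov(z, x), so α = Cov(z, y*)/Cov(z, x). -/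
open MeasureTheory

private lemma cov_lin {Ω : Type*} [MeasurableSpace Ω] (μ : Measure Ω)
    [IsProbabilityMeasure μ] (f g h : Ω → ℝ) (a : ℝ)
    (hf : MemLp f 2 μ) (hg : MemLp g 2 μ) (hh : MemLp h 2 μ) :
    cov μ f (fun ω => a * g ω + h ω) = a * cov μ f g + cov μ f h := by
  have hfi : Integrable f μ := hf.integrable one_le_two
  have hgi : Integrable g μ := hg.integrable one_le_two
  have hhi : Integrable h μ := hh.integrable one_le_two
  have hf' : MemLp (fun ω => f ω - ∫ x, f x ∂μ) 2 μ :=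
    hf.sub (memLp_const _)
  have hg' : MemLp (fun ω => g ω - ∫ x, g x ∂μ) 2 μ :=
    hg.sub (memLp_const _)
  have hh' : MemLp (fun ω => h ω - ∫ x, h x ∂μ) 2 μ :=
    hh.sub (memLp_const _)
  have hmul : ∀ {a b : Ω → ℝ}, MemLp a 2 μ → MemLp b 2 μ →
      Integrable (fun ω => a ω * b ω) μ := by
    intro a b ha hb
    exact memLp_one_iff_integrable.mp (hb.smul ha (r := 1) (hpqr := ⟨by simp [ENNReal.inv_two_add_inv_two]⟩))
  have hfg : Integrable (fun ω => (f ω - ∫ x, f x ∂μ) * (g ω - ∫ x, g x ∂μ)) μ :=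
    hmul hf' hg'
  have hfh : Integrable (fun ω => (f ω - ∫ x, f x ∂μ) * (h ω - ∫ x, h x ∂μ)) μ :=
    hmul hf' hh'
  have hE : (∫ ω, (a * g ω + h ω) ∂μ) = a * (∫ x, g x ∂μ) + ∫ x, h x ∂μ := by
    rw [integral_add (hgi.const_mul a) hhi, integral_const_mul]
  unfold cov
  rw [hE]
  have : ∀ ω, (f ω - ∫ x, f x ∂μ) * ((a * g ω + h ω) - (a * (∫ x, g x ∂μ) + ∫ x, h x ∂μ))
      = a * ((f ω - ∫ x, f x ∂μ) * (g ω - ∫ x, g x ∂μ))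
        + (f ω - ∫ x, f x ∂μ) * (h ω - ∫ x, h x ∂μ) := by
    intro ω; ring
  simp_rw [this]
  rw [integral_add (hfg.const_mul a) hfh, integral_const_mul]

/-- quasi-instruments / z-identification: in the SEM
z = u_z, x = c·z + u_x, y = α·x + γ·z + u_y, with u_z uncorrelated with u_x and u_y
(but u_x, u_y arbitrarily correlated) and Cov(z,x) = c·Var(u_z) ≠ 0, the auxiliary
variable y* = y − γ·z satisfies Cov(z,y*) = α·Cov(z,x), so α = Cov(z,y*)/Cov(z,x). -/
theorem quasi_instrument_z_identification
    {Ω : Type*} [MeasurableSpace Ω] (μ : Measure Ω) [IsProbabilityMeasure μ]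
    (uz ux uy z x y : Ω → ℝ) (α γ c : ℝ)
    (huz2 : MemLp uz 2 μ) (hux2 : MemLp ux 2 μ) (huy2 : MemLp uy 2 μ)
    (hz : ∀ ω, z ω = uz ω)
    (hx : ∀ ω, x ω = c * z ω + ux ω)
    (hy : ∀ ω, y ω = α * x ω + γ * z ω + uy ω)
    (huzux : cov μ uz ux = 0) (huzuy : cov μ uz uy = 0)
    (hzx : cov μ z x = c * cov μ uz uz) (hzx0 : cov μ z x ≠ 0)
    (ystar : Ω → ℝ) (hystar : ∀ ω, ystar ω = y ω - γ * z ω) :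
    cov μ z ystar = α * cov μ z x ∧ α = cov μ z ystar / cov μ z x := by
  have hzeq : z = uz := funext hz
  have hys : ystar = fun ω => (α * c) * uz ω + (α * ux ω + uy ω) := by
    funext ω; rw [hystar, hy, hx, hz]; ring
  have hh2 : MemLp (fun ω => α * ux ω + uy ω) 2 μ := (hux2.const_mul α).add huy2
  have h1 : cov μ z ystar = α * cov μ z x := by
    rw [hys, hzx, hzeq, cov_lin μ uz uz _ _ huz2 huz2 hh2,
      cov_lin μ uz ux uy α huz2 hux2 huy2, huzux, huzuy]
    ring
  exact ⟨h1, by field_simp [h1]; exact h1.symm⟩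
end
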